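/- Let S = (ℤ/Nℤ)^d and suppose u₊, u : [0,T] × S → ℝ are C¹ in time, φ : ℝ → ℝ is differentiable and non-decreasing, f(t,x,·) : ℝ^S → ℝ is C¹ with uniformly bounded difference quotients along the trajectories, u satisfies ∂_t u(t,x) = Δ^N φ(u(t,x)) + f(t,x,u(t)), u₊ satisfies ∂_t u₊(t,x) ≥ Δ^N φ(u₊(t,x)) + f(t,x,u₊(t)), and u₊(0,x) ≥ u(0,x) for all x. Then u₊(t,x) ≥ u(t,x) for all t ∈ [0,T] and x ∈ S. -/

import Mathlib

/-!
The proof is an L¹-contraction argument.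
Let `F t = ∑ₓ (u - u₊)⁺(t, x)`. Where `u ≥ u₊`, monotonicity of `φ` makes `φ(u) - φ(u₊)` agree
with its positive part `p`, which dominates it everywhere, so `Δ(φ(u) - φ(u₊)) ≤ Δp` there
(Kato's inequality); where `u < u₊` we have `Δp ≥ 0`. Hence the upper right Dini derivative of
`F` is at most `N² ∑ₓ Δp + M F = M F`, because the discrete Laplacian sums to zero over the
torus, and Grönwall's inequality with `F 0 = 0` gives `F ≡ 0`.
-/

open Filter Topology Set

section DiscreteLaplacian

variable {G ι : Type*} [AddCommGroup G] [Fintype ι] (e : ι → G)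

/-- For `e = fun j => Pi.single j 1` on `(ZMod N)^d`, the paper's `Δ^N` is `N ^ 2` times this. -/
def discreteLaplacian (w : G → ℝ) (x : G) : ℝ :=
  ∑ j, (w (x + e j) + w (x - e j) - 2 * w x)

theorem discreteLaplacian_sub (v w : G → ℝ) (x : G) :
    discreteLaplacian e (fun y => v y - w y) x =
      discreteLaplacian e v x - discreteLaplacian e w x := by
  simp only [discreteLaplacian, ← Finset.sum_sub_distrib]
  exact Finset.sum_congr rfl fun _ _ => by ring

theorem discreteLaplacian_le_of_le_of_eq {v w : G → ℝ} {x : G} (hle : v ≤ w)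
    (heq : v x = w x) : discreteLaplacian e v x ≤ discreteLaplacian e w x :=
  Finset.sum_le_sum fun j _ => by linarith [hle (x + e j), hle (x - e j)]

theorem discreteLaplacian_le_posPart {g : G → ℝ} {x : G} (hx : 0 ≤ g x) :
    discreteLaplacian e g x ≤ discreteLaplacian e (fun y => (g y)⁺) x :=
  discreteLaplacian_le_of_le_of_eq e (fun y => le_posPart (g y)) (posPart_eq_self.2 hx).symm

theorem discreteLaplacian_posPart_nonneg {g : G → ℝ} {x : G} (hx : g x ≤ 0) :
    0 ≤ discreteLaplacian e (fun y => (g y)⁺) x := by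
  have := discreteLaplacian_le_of_le_of_eq e (v := 0) (w := fun y => (g y)⁺)
    (fun y => posPart_nonneg (g y)) (posPart_eq_zero.2 hx).symm
  simpa [discreteLaplacian] using this

theorem sum_discreteLaplacian [Fintype G] (w : G → ℝ) : ∑ x, discreteLaplacian e w x = 0 := by
  unfold discreteLaplacian
  rw [Finset.sum_comm]
  refine Finset.sum_eq_zero fun j _ => ?_
  rw [Finset.sum_sub_distrib, Finset.sum_add_distrib, ← Finset.mul_sum,
    Fintype.sum_equiv (Equiv.addRight (e j)) (fun x => w (x + e j)) w fun _ => rfl,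
    Fintype.sum_equiv (Equiv.subRight (e j)) (fun x => w (x - e j)) w fun _ => rfl]
  ring

end DiscreteLaplacian

section Dini

def UpperRightDiniLE (f : ℝ → ℝ) (t B : ℝ) : Prop :=
  ∀ r, B < r → ∀ᶠ z in 𝓝[>] t, slope f t z < r

theorem UpperRightDiniLE.sum {ι : Type*} [Fintype ι] {F : ι → ℝ → ℝ} {B : ι → ℝ} {t : ℝ}
    (hF : ∀ i, UpperRightDiniLE (F i) t (B i)) :
    UpperRightDiniLE (fun z => ∑ i, F i z) t (∑ i, B i) := by
  intro r hr
  set c := (r - ∑ i, B i) / (Fintype.card ι + 1)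
  have hc : 0 < c := div_pos (sub_pos.2 hr) (by positivity)
  have hcr : (Fintype.card ι + 1) * c = r - ∑ i, B i := by
    simp only [c]
    field_simp
  filter_upwards [eventually_all.2 fun i => hF i (B i + c) (by linarith)] with z hz
  calc slope (fun z => ∑ i, F i z) t z = ∑ i, slope (F i) t z := by
        simp only [slope_def_module, smul_eq_mul, ← Finset.sum_sub_distrib, Finset.mul_sum]
    _ ≤ ∑ i, (B i + c) := Finset.sum_le_sum fun i _ => (hz i).le
    _ = ∑ i, B i + Fintype.card ι * c := by
        rw [Finset.sum_add_distrib, Finset.sum_const, Finset.card_univ, nsmul_eq_mul]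
    _ < r := by linarith

theorem HasDerivWithinAt.upperRightDiniLE_posPart {h : ℝ → ℝ} {h' B t : ℝ}
    (hd : HasDerivWithinAt h h' (Ioi t) t) (hneg : h t ≤ 0 → 0 ≤ B)
    (hpos : 0 ≤ h t → h' ≤ B) : UpperRightDiniLE (fun z => (h z)⁺) t B := by
  intro r hr
  have hslope : Tendsto (slope h t) (𝓝[>] t) (𝓝 h') :=
    (hasDerivWithinAt_iff_tendsto_slope' (lt_irrefl t)).1 hd
  have hcont : Tendsto h (𝓝[>] t) (𝓝 (h t)) := hd.continuousWithinAt
  rcases lt_trichotomy (h t) 0 with hlt | heq | hgt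
  · filter_upwards [hcont.eventually_lt_const hlt] with z hz
    simp only [slope_def_module, posPart_eq_zero.2 hz.le, posPart_eq_zero.2 hlt.le, sub_zero,
      smul_zero]
    linarith [hneg hlt.le]
  · filter_upwards [hslope.eventually_lt_const (lt_of_le_of_lt (hpos heq.ge) hr)] with z hz
    rcases le_total (h z) 0 with hz0 | hz0
    · simp only [slope_def_module, posPart_eq_zero.2 hz0, heq, posPart_zero, sub_zero, smul_zero]
      linarith [hneg heq.le]
    · simpa only [slope_def_module, posPart_eq_self.2 hz0, heq, posPart_zero] using hz
  · filter_upwards [hcont.eventually_const_lt hgt,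
      hslope.eventually_lt_const (lt_of_le_of_lt (hpos hgt.le) hr)] with z hz hs
    simpa only [slope_def_module, posPart_eq_self.2 hz.le, posPart_eq_self.2 hgt.le] using hs

theorem nonpos_of_upperRightDiniLE {F : ℝ → ℝ} {K a b : ℝ} (hc : ContinuousOn F (Icc a b))
    (hd : ∀ t ∈ Ico a b, UpperRightDiniLE F t (K * F t)) (ha : F a ≤ 0) :
    ∀ t ∈ Icc a b, F t ≤ 0 := by
  intro t ht
  simpa only [gronwallBound_ε0_δ0] using
    le_gronwallBound_of_liminf_deriv_right_le (f' := fun s => K * F s) (ε := 0) hc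
      (fun s hs r hr => (hd s hs r hr).frequently) ha (fun s _ => (add_zero _).ge) t ht

end Dini

section Comparison

variable {G ι : Type*} [AddCommGroup G] [Fintype ι] {e : ι → G} {φ : ℝ → ℝ} {c M t : ℝ}
  {u v : ℝ → G → ℝ} {fu fv dv : G → ℝ}

theorem upperRightDiniLE_posPart_sub (hφ : Monotone φ) (hc : 0 ≤ c) {y : G}
    (hu : HasDerivWithinAt (fun s => u s y)
      (c * discreteLaplacian e (fun z => φ (u t z)) y + fu y) (Ioi t) t)
    (hv : HasDerivWithinAt (fun s => v s y) (dv y) (Ioi t) t)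
    (hsuper : c * discreteLaplacian e (fun z => φ (v t z)) y + fv y ≤ dv y)
    (hf : |fv y - fu y| ≤ M * |v t y - u t y|) :
    UpperRightDiniLE (fun s => (u s y - v s y)⁺) t
      (c * discreteLaplacian e (fun z => (φ (u t z) - φ (v t z))⁺) y +
        M * (u t y - v t y)⁺) := by
  refine (hu.fun_sub hv).upperRightDiniLE_posPart (fun hle => ?_) (fun hge => ?_)
  · have hφle : φ (u t y) - φ (v t y) ≤ 0 := sub_nonpos.2 (hφ (sub_nonpos.1 hle))
    rw [posPart_eq_zero.2 hle, mul_zero, add_zero]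
    exact mul_nonneg hc (discreteLaplacian_posPart_nonneg e hφle)
  · have hφge : 0 ≤ φ (u t y) - φ (v t y) := sub_nonneg.2 (hφ (sub_nonneg.1 hge))
    have hfle : fu y - fv y ≤ M * (u t y - v t y) := by
      rw [abs_sub_comm (v t y), abs_of_nonneg hge] at hf
      linarith [neg_abs_le (fv y - fu y)]
    have hlap : discreteLaplacian e (fun z => φ (u t z) - φ (v t z)) y ≤
        discreteLaplacian e (fun z => (φ (u t z) - φ (v t z))⁺) y :=
      discreteLaplacian_le_posPart e hφge
    rw [discreteLaplacian_sub] at hlap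
    rw [posPart_eq_self.2 hge]
    linarith [mul_le_mul_of_nonneg_left hlap hc]

theorem upperRightDiniLE_sum_posPart_sub [Fintype G] (hφ : Monotone φ) (hc : 0 ≤ c)
    (hu : ∀ y, HasDerivWithinAt (fun s => u s y)
      (c * discreteLaplacian e (fun z => φ (u t z)) y + fu y) (Ioi t) t)
    (hv : ∀ y, HasDerivWithinAt (fun s => v s y) (dv y) (Ioi t) t)
    (hsuper : ∀ y, c * discreteLaplacian e (fun z => φ (v t z)) y + fv y ≤ dv y)
    (hf : ∀ y, |fv y - fu y| ≤ M * |v t y - u t y|) :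
    UpperRightDiniLE (fun s => ∑ y, (u s y - v s y)⁺) t (M * ∑ y, (u t y - v t y)⁺) := by
  have h := UpperRightDiniLE.sum fun y =>
    upperRightDiniLE_posPart_sub hφ hc (hu y) (hv y) (hsuper y) (hf y)
  rwa [Finset.sum_add_distrib, ← Finset.mul_sum, sum_discreteLaplacian, mul_zero, zero_add,
    ← Finset.mul_sum] at h

end Comparison

theorem stmt16_general (d N : ℕ) [NeZero N] (T : ℝ)
    (φ : ℝ → ℝ) (hφm : Monotone φ)
    (f : ℝ → (Fin d → ZMod N) → ((Fin d → ZMod N) → ℝ) → ℝ)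
    (u up : ℝ → (Fin d → ZMod N) → ℝ) (dup : ℝ → (Fin d → ZMod N) → ℝ)
    (M : ℝ)
    (hM : ∀ t ∈ Set.Icc (0 : ℝ) T, ∀ x,
      |f t x (up t) - f t x (u t)| ≤ M * |up t x - u t x|)
    (hu : ∀ t ∈ Set.Icc (0 : ℝ) T, ∀ x, HasDerivWithinAt (fun s => u s x)
      ((N : ℝ) ^ 2 * ∑ j : Fin d,
          (φ (u t (x + Pi.single j 1)) + φ (u t (x - Pi.single j 1)) - 2 * φ (u t x))
        + f t x (u t)) (Set.Icc 0 T) t)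
    (hup : ∀ t ∈ Set.Icc (0 : ℝ) T, ∀ x,
      HasDerivWithinAt (fun s => up s x) (dup t x) (Set.Icc 0 T) t)
    (hsup : ∀ t ∈ Set.Icc (0 : ℝ) T, ∀ x,
      (N : ℝ) ^ 2 * ∑ j : Fin d,
          (φ (up t (x + Pi.single j 1)) + φ (up t (x - Pi.single j 1)) - 2 * φ (up t x))
        + f t x (up t) ≤ dup t x)
    (hinit : ∀ x, u 0 x ≤ up 0 x) :
    ∀ t ∈ Set.Icc (0 : ℝ) T, ∀ x, u t x ≤ up t x := by
  set F : ℝ → ℝ := fun t => ∑ x, (u t x - up t x)⁺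
  have hcont : ContinuousOn F (Icc 0 T) := continuousOn_finsetSum _ fun x _ =>
    continuous_posPart.comp_continuousOn fun t ht =>
      ((hu t ht x).fun_sub (hup t ht x)).continuousWithinAt
  have hdini : ∀ t ∈ Ico 0 T, UpperRightDiniLE F t (M * F t) := by
    intro t ht
    have htT := Ico_subset_Icc_self ht
    have hnhds : Icc 0 T ∈ 𝓝[>] t := mem_of_superset (Ioo_mem_nhdsGT ht.2)
      (Ioo_subset_Icc_self.trans (Icc_subset_Icc_left ht.1))
    exact upperRightDiniLE_sum_posPart_sub (e := fun j => Pi.single j 1) hφm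
      (sq_nonneg (N : ℝ))
      (fun x => (hu t htT x).mono_of_mem_nhdsWithin hnhds)
      (fun x => (hup t htT x).mono_of_mem_nhdsWithin hnhds) (hsup t htT) (hM t htT)
  have hF0 : F 0 ≤ 0 :=
    Finset.sum_nonpos fun x _ => (posPart_eq_zero.2 (sub_nonpos.2 (hinit x))).le
  intro t ht x
  have hFt := nonpos_of_upperRightDiniLE hcont hdini hF0 t ht
  exact sub_nonpos.1 <| (le_posPart _).trans <|
    (Finset.single_le_sum (fun y _ => posPart_nonneg _) (Finset.mem_univ x)).trans hFt

/-- Comparison principle for the semi-discrete equation `∂_t u = Δ^N φ(u) + f(t,x,u)` on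
the discrete torus: a super-solution `up` that dominates a solution `u` at time `0`
dominates it on all of `[0,T]`, provided `φ` is differentiable and non-decreasing and the
difference quotients of `f` along the two trajectories are uniformly bounded. -/
theorem stmt16 (d N : ℕ) [NeZero N] (T : ℝ) (hT : 0 ≤ T)
    (φ φ' : ℝ → ℝ) (hφd : ∀ s, HasDerivAt φ (φ' s) s) (hφm : Monotone φ)
    (f : ℝ → (Fin d → ZMod N) → ((Fin d → ZMod N) → ℝ) → ℝ)
    (u up : ℝ → (Fin d → ZMod N) → ℝ) (dup : ℝ → (Fin d → ZMod N) → ℝ)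
    (M : ℝ)
    (hM : ∀ t ∈ Set.Icc (0 : ℝ) T, ∀ x,
      |f t x (up t) - f t x (u t)| ≤ M * |up t x - u t x|)
    (hu : ∀ t ∈ Set.Icc (0 : ℝ) T, ∀ x, HasDerivWithinAt (fun s => u s x)
      ((N : ℝ) ^ 2 * ∑ j : Fin d,
          (φ (u t (x + Pi.single j 1)) + φ (u t (x - Pi.single j 1)) - 2 * φ (u t x))
        + f t x (u t)) (Set.Icc 0 T) t)
    (hup : ∀ t ∈ Set.Icc (0 : ℝ) T, ∀ x,
      HasDerivWithinAt (fun s => up s x) (dup t x) (Set.Icc 0 T) t)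
    (hsup : ∀ t ∈ Set.Icc (0 : ℝ) T, ∀ x,
      (N : ℝ) ^ 2 * ∑ j : Fin d,
          (φ (up t (x + Pi.single j 1)) + φ (up t (x - Pi.single j 1)) - 2 * φ (up t x))
        + f t x (up t) ≤ dup t x)
    (hinit : ∀ x, u 0 x ≤ up 0 x) :
    ∀ t ∈ Set.Icc (0 : ℝ) T, ∀ x, u t x ≤ up t x :=
  stmt16_general d N T φ hφm f u up dup M hM hu hup hsup hinit
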